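/- (Breitenberger uncertainty principle for the circle) Let f : 𝕋 → ℂ be absolutely continuous with f' ∈ L²(𝕋). Then |∫₀^{2π} e^{iθ}|f(e^{iθ})|² dθ|² ≤ 4 ‖f‖² · ‖f'‖², where ‖·‖ is the L²(𝕋)-norm. -/

import Mathlib

/-!
Integrating the derivative of `e^{iθ} |f θ|²` over a period gives zero (the fundamental theorem
of calculus for absolutely continuous functions, whose derivatives exist only a.e.), so
`∫ e^{iθ} |f|² = i ∫ e^{iθ} (|f|²)'`. Since `(|f|²)' = 2 ⟪f, f'⟫` is bounded by `2 |f| |f'|`,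
the left-hand side is at most `2 ∫ |f| |f'|`, and Cauchy–Schwarz finishes the proof.
-/

open Complex Real MeasureTheory Set

section AbsolutelyContinuous

open Filter AbsolutelyContinuousOnInterval in
theorem AbsolutelyContinuousOnInterval.of_dist_le_mul {X Y : Type*} [PseudoMetricSpace X]
    [PseudoMetricSpace Y] {F : ℝ → Y} {G : ℝ → X} {a b : ℝ}
    (hG : AbsolutelyContinuousOnInterval G a b) (K : ℝ)
    (h : ∀ x ∈ uIcc a b, ∀ y ∈ uIcc a b, dist (F x) (F y) ≤ K * dist (G x) (G y)) :
    AbsolutelyContinuousOnInterval F a b := by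
  have hK := (Tendsto.const_mul K hG).congr fun E ↦ Finset.mul_sum _ _ K
  rw [mul_zero] at hK
  refine squeeze_zero' (Eventually.of_forall fun _ ↦ Finset.sum_nonneg fun _ _ ↦ dist_nonneg)
    ?_ hK
  filter_upwards [eventually_inf_principal.mpr (Eventually.of_forall fun E hE ↦ hE)]
    with E hE
  exact Finset.sum_le_sum fun i hi ↦ h _ (hE.1 i hi).1 _ (hE.1 i hi).2

theorem LipschitzWith.comp_absolutelyContinuousOnInterval {X Y : Type*} [PseudoMetricSpace X]
    [PseudoMetricSpace Y] {g : X → Y} {K : NNReal} (hg : LipschitzWith K g) {f : ℝ → X}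
    {a b : ℝ} (hf : AbsolutelyContinuousOnInterval f a b) :
    AbsolutelyContinuousOnInterval (g ∘ f) a b :=
  hf.of_dist_le_mul K fun x _ y _ ↦ hg.dist_le_mul (f x) (f y)

variable {E : Type*} [NormedAddCommGroup E] [NormedSpace ℝ E]

/-- The primitive is controlled, as in `of_dist_le_mul`, by the real primitive of `‖f‖`,
which is absolutely continuous by the real-valued case. -/
theorem IntervalIntegrable.absolutelyContinuousOnInterval_primitive {f : ℝ → E} {a b c : ℝ}
    (hf : IntervalIntegrable f volume a b) (hc : c ∈ uIcc a b) :
    AbsolutelyContinuousOnInterval (fun x ↦ ∫ t in c..x, f t) a b := by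
  refine (hf.norm.absolutelyContinuousOnInterval_intervalIntegral hc).of_dist_le_mul 1
    fun x hx y hy ↦ ?_
  have hint : ∀ {u v}, u ∈ uIcc a b → v ∈ uIcc a b → IntervalIntegrable f volume u v :=
    fun hu hv ↦ hf.mono_set (uIcc_subset_uIcc hu hv)
  rw [one_mul, dist_eq_norm, dist_eq_norm, Real.norm_eq_abs,
    intervalIntegral.integral_interval_sub_left (hint hc hx) (hint hc hy),
    intervalIntegral.integral_interval_sub_left (hint hc hx).norm (hint hc hy).norm]
  exact intervalIntegral.norm_integral_le_abs_integral_norm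

theorem absolutelyContinuousOnInterval_of_forall_eq_add_integral {f f' : ℝ → E} {a b c : ℝ}
    (hf : ∀ x, f x = f c + ∫ t in c..x, f' t) (hf' : IntervalIntegrable f' volume a b)
    (hc : c ∈ uIcc a b) :
    AbsolutelyContinuousOnInterval f a b :=
  (hf'.absolutelyContinuousOnInterval_primitive hc).of_dist_le_mul 1 fun x _ y _ ↦ by
    rw [hf x, hf y, dist_add_left, one_mul]

variable [CompleteSpace E]

theorem ae_hasDerivAt_of_forall_eq_add_integral {f f' : ℝ → E} {c : ℝ}
    (hf : ∀ x, f x = f c + ∫ t in c..x, f' t) (hf' : LocallyIntegrable f' volume) :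
    ∀ᵐ x, HasDerivAt f (f' x) x := by
  filter_upwards [LocallyIntegrable.ae_hasDerivAt_integral hf'] with x hx
  rw [funext hf]
  exact (hx c).const_add _

theorem AbsolutelyContinuousOnInterval.integral_eq_sub_of_ae_hasDerivAt {F F' : ℝ → E} {a b : ℝ}
    (hF : AbsolutelyContinuousOnInterval F a b)
    (hF' : ∀ᵐ x, x ∈ uIcc a b → HasDerivAt F (F' x) x)
    (hint : IntervalIntegrable F' volume a b) :
    ∫ x in a..b, F' x = F b - F a := by
  set G : ℝ → E := fun x ↦ F x - ∫ t in a..x, F' t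
  have hG : AbsolutelyContinuousOnInterval G a b :=
    hF.sub (hint.absolutelyContinuousOnInterval_primitive left_mem_uIcc)
  have hG' : ∀ᵐ x, x ∈ uIcc a b → HasDerivAt G 0 x := by
    filter_upwards [hF', hint.ae_hasDerivAt_integral] with x hFx hIx hx
    simpa using (hFx hx).fun_sub (hIx hx a left_mem_uIcc)
  obtain ⟨C, hC⟩ := hG.const_of_ae_hasDerivAt_zero hG'
  have hb := hC b right_mem_uIcc
  have ha := hC a left_mem_uIcc
  simp only [G, intervalIntegral.integral_same, sub_zero] at ha hb
  rw [← ha, sub_eq_iff_eq_add'] at hb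
  rw [hb, add_sub_cancel_right]

end AbsolutelyContinuous

theorem sq_integral_norm_mul_norm_le {α E : Type*} [MeasurableSpace α] {μ : Measure α}
    [NormedAddCommGroup E] {f g : α → E} (hf : MemLp f 2 μ) (hg : MemLp g 2 μ) :
    (∫ x, ‖f x‖ * ‖g x‖ ∂μ) ^ 2 ≤ (∫ x, ‖f x‖ ^ 2 ∂μ) * ∫ x, ‖g x‖ ^ 2 ∂μ := by
  have hholder := integral_mul_norm_le_Lp_mul_Lq Real.HolderConjugate.two_two
    (by simpa using hf) (by simpa using hg)
  simp only [Real.rpow_two, ← Real.sqrt_eq_rpow] at hholder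
  calc (∫ x, ‖f x‖ * ‖g x‖ ∂μ) ^ 2
      ≤ (√(∫ x, ‖f x‖ ^ 2 ∂μ) * √(∫ x, ‖g x‖ ^ 2 ∂μ)) ^ 2 :=
        pow_le_pow_left₀ (integral_nonneg fun x ↦ by positivity) hholder 2
    _ = (∫ x, ‖f x‖ ^ 2 ∂μ) * ∫ x, ‖g x‖ ^ 2 ∂μ := by
        rw [mul_pow, Real.sq_sqrt (integral_nonneg fun x ↦ by positivity),
          Real.sq_sqrt (integral_nonneg fun x ↦ by positivity)]

theorem integral_exp_mul_eq_I_mul_integral_exp_mul_deriv {h h' : ℝ → ℂ}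
    (hac : AbsolutelyContinuousOnInterval h 0 (2 * π)) (hper : h (2 * π) = h 0)
    (hd : ∀ᵐ θ, θ ∈ uIcc 0 (2 * π) → HasDerivAt h (h' θ) θ)
    (hint : IntervalIntegrable h' volume 0 (2 * π)) :
    ∫ θ in (0:ℝ)..(2 * π), exp (I * θ) * h θ =
      I * ∫ θ in (0:ℝ)..(2 * π), exp (I * θ) * h' θ := by
  have hexp : Continuous fun t : ℝ ↦ exp (I * t) := by fun_prop
  have hexp_deriv (θ : ℝ) : HasDerivAt (fun t : ℝ ↦ exp (I * t)) (I * exp (I * θ)) θ := by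
    simpa [mul_comm] using ((hasDerivAt_id θ).ofReal_comp.const_mul I).cexp
  have hexp_ac : AbsolutelyContinuousOnInterval (fun t : ℝ ↦ exp (I * t)) 0 (2 * π) :=
    (contDiff_const.mul ofRealCLM.contDiff).cexp.contDiffOn.absolutelyContinuousOnInterval
  have hint₁ : IntervalIntegrable (fun θ : ℝ ↦ I * exp (I * θ) * h θ) volume 0 (2 * π) :=
    ((hexp.const_mul I).continuousOn.mul hac.continuousOn).intervalIntegrable
  have hint₂ : IntervalIntegrable (fun θ : ℝ ↦ exp (I * θ) * h' θ) volume 0 (2 * π) :=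
    hint.continuousOn_mul hexp.continuousOn
  have hftc := (AbsolutelyContinuousOnInterval.fun_smul (M := ℂ) (F := ℂ) hexp_ac hac)
    |>.integral_eq_sub_of_ae_hasDerivAt (hd.mono fun θ hθ hmem ↦
      (hexp_deriv θ).mul (hθ hmem)) (hint₁.add hint₂)
  have hexp_two_pi : exp (I * (2 * π : ℝ)) = 1 := by
    rw [← exp_two_pi_mul_I]; push_cast; ring_nf
  simp only [smul_eq_mul, hper, hexp_two_pi, ofReal_zero, mul_zero, Complex.exp_zero, one_mul,
    sub_self] at hftc
  rw [intervalIntegral.integral_add hint₁ hint₂] at hftc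
  simp only [mul_assoc, intervalIntegral.integral_const_mul] at hftc
  linear_combination (-I) * hftc + (∫ θ in (0:ℝ)..(2 * π), exp (I * θ) * h θ) * I_sq

theorem norm_integral_exp_mul_norm_sq_le {f f' : ℝ → ℂ}
    (hac : AbsolutelyContinuousOnInterval f 0 (2 * π)) (hper : f (2 * π) = f 0)
    (hd : ∀ᵐ θ, HasDerivAt f (f' θ) θ) (hf' : IntervalIntegrable f' volume 0 (2 * π)) :
    ‖∫ θ in (0:ℝ)..(2 * π), exp (I * θ) * (‖f θ‖ ^ 2 : ℝ)‖ ≤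
      2 * ∫ θ in (0:ℝ)..(2 * π), ‖f θ‖ * ‖f' θ‖ := by
  have hnorm_sq_ac : AbsolutelyContinuousOnInterval (fun θ ↦ ((‖f θ‖ ^ 2 : ℝ) : ℂ)) 0 (2 * π) := by
    have hnorm := lipschitzWith_one_norm.comp_absolutelyContinuousOnInterval hac
    simpa [Function.comp_def, pow_two] using
      isometry_ofReal.lipschitz.comp_absolutelyContinuousOnInterval (hnorm.fun_mul hnorm)
  have hbound : IntervalIntegrable (fun θ ↦ 2 * (‖f θ‖ * ‖f' θ‖)) volume 0 (2 * π) :=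
    (hf'.norm.continuousOn_mul hac.continuousOn.norm).const_mul 2
  have hinner_le (θ : ℝ) : ‖((2 * inner ℝ (f θ) (f' θ) : ℝ) : ℂ)‖ ≤ 2 * (‖f θ‖ * ‖f' θ‖) := by
    rw [norm_real, norm_mul, Real.norm_two]
    exact mul_le_mul_of_nonneg_left (norm_inner_le_norm _ _) zero_le_two
  have hf_meas : AEStronglyMeasurable f (volume.restrict (uIoc 0 (2 * π))) :=
    (hac.continuousOn.mono uIoc_subset_uIcc).aestronglyMeasurable measurableSet_uIoc
  have hinner_int : IntervalIntegrable (fun θ ↦ ((2 * inner ℝ (f θ) (f' θ) : ℝ) : ℂ))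
      volume 0 (2 * π) :=
    hbound.mono_fun' (continuous_ofReal.comp_aestronglyMeasurable
      ((hf_meas.inner (𝕜 := ℝ) hf'.aestronglyMeasurable_restrict_uIoc).const_mul (2 : ℝ)))
      (ae_of_all _ hinner_le)
  rw [integral_exp_mul_eq_I_mul_integral_exp_mul_deriv hnorm_sq_ac (by rw [hper])
    (hd.mono fun θ hθ _ ↦ hθ.norm_sq.ofReal_comp) hinner_int,
    norm_mul, norm_I, one_mul, ← intervalIntegral.integral_const_mul]
  refine intervalIntegral.norm_integral_le_of_norm_le (by positivity)
    (ae_of_all _ fun θ _ ↦ ?_) hbound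
  rw [norm_mul, norm_exp_I_mul_ofReal, one_mul]
  exact hinner_le θ

/-- Breitenberger's uncertainty principle for the circle: for `f` absolutely
continuous on `𝕋` with angular derivative `f' ∈ L²(𝕋)`,
`|∫₀^{2π} e^{iθ}|f(e^{iθ})|² dθ|² ≤ 4‖f‖²‖f'‖²`. -/
theorem breitenberger_uncertainty (f f' : ℝ → ℂ)
    (hper : Function.Periodic f (2 * π))
    (hloc : MeasureTheory.LocallyIntegrable f' MeasureTheory.volume)
    (hAC : ∀ θ : ℝ, f θ = f 0 + ∫ s in (0:ℝ)..θ, f' s)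
    (hL2 : MeasureTheory.MemLp f' 2 (MeasureTheory.volume.restrict (Set.Ioc 0 (2 * π)))) :
    ‖∫ θ in (0:ℝ)..(2 * π), Complex.exp (Complex.I * θ) * (‖f θ‖ ^ 2 : ℝ)‖ ^ 2 ≤
      4 * (∫ θ in (0:ℝ)..(2 * π), ‖f θ‖ ^ 2) * ∫ θ in (0:ℝ)..(2 * π), ‖f' θ‖ ^ 2 := by
  have h2π : (0:ℝ) ≤ 2 * π := by positivity
  have hf'_int : IntervalIntegrable f' volume 0 (2 * π) :=
    (hloc.integrableOn_isCompact isCompact_uIcc).intervalIntegrable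
  have hf_ac : AbsolutelyContinuousOnInterval f 0 (2 * π) :=
    absolutelyContinuousOnInterval_of_forall_eq_add_integral hAC hf'_int left_mem_uIcc
  have hmoment := norm_integral_exp_mul_norm_sq_le hf_ac (by simpa using hper 0)
    (ae_hasDerivAt_of_forall_eq_add_integral hAC hloc) hf'_int
  have hf_memLp : MemLp f 2 (volume.restrict (Ioc 0 (2 * π))) := by
    have hf_cont : ContinuousOn f (Icc 0 (2 * π)) := uIcc_of_le h2π ▸ hf_ac.continuousOn
    exact (memLp_two_iff_integrable_sq_norm
      ((hf_cont.mono Ioc_subset_Icc_self).aestronglyMeasurable measurableSet_Ioc)).mpr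
      ((hf_cont.norm.pow 2).integrableOn_Icc.mono_set Ioc_subset_Icc_self)
  have hCS := sq_integral_norm_mul_norm_le hf_memLp hL2
  simp only [← intervalIntegral.integral_of_le h2π] at hCS
  calc _ ≤ (2 * ∫ θ in (0:ℝ)..(2 * π), ‖f θ‖ * ‖f' θ‖) ^ 2 :=
        pow_le_pow_left₀ (norm_nonneg _) hmoment 2
    _ ≤ _ := by nlinarith
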